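/- Let K be a convex subset of a real vector space, φ : K → ℝ convex with finite infimum and supremum over K, and ψ : K → ℝ affine. Suppose there exist x₁, x₂ ∈ K with ψ(x₁) > 0 and ψ(x₂) < 0. If x* minimizes φ over the set {x ∈ K : ψ(x) = 0}, then there exists λ ∈ ℝ satisfying (inf_K φ − sup_K φ)/ψ(x₁) ≤ λ ≤ (inf_K φ − sup_K φ)/ψ(x₂) such that φ(x) + λ·ψ(x) ≥ φ(x*) for all x ∈ K. -/
import Mathlib


/-- Kuhn–Tucker-type multiplier rule with explicit bounds on the multiplier:
if `x*` minimizes the convex function `φ` over `{x ∈ K : ψ x = 0}` where `ψ` is affine and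
takes both signs on `K`, then there is a Lagrange multiplier `λ` with explicit bounds such that
`φ x + λ ψ x ≥ φ x*` on `K`. -/
theorem stmt1 {V : Type*} [AddCommGroup V] [Module ℝ V]
    (K : Set V) (hK : Convex ℝ K)
    (φ : V → ℝ) (hφ : ConvexOn ℝ K φ)
    (hbddB : BddBelow (φ '' K)) (hbddA : BddAbove (φ '' K))
    (ψ : V →ᵃ[ℝ] ℝ)
    (x₁ x₂ : V) (hx₁ : x₁ ∈ K) (hx₂ : x₂ ∈ K)
    (hψ₁ : 0 < ψ x₁) (hψ₂ : ψ x₂ < 0)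
    (xs : V) (hxs : xs ∈ K) (hψs : ψ xs = 0)
    (hmin : ∀ x ∈ K, ψ x = 0 → φ xs ≤ φ x) :
    ∃ lam : ℝ,
      (sInf (φ '' K) - sSup (φ '' K)) / ψ x₁ ≤ lam ∧
      lam ≤ (sInf (φ '' K) - sSup (φ '' K)) / ψ x₂ ∧
      ∀ x ∈ K, φ xs ≤ φ x + lam * ψ x := by
  have hm : ∀ x ∈ K, sInf (φ '' K) ≤ φ x := fun x hx => csInf_le hbddB ⟨x, hx, rfl⟩
  have hM : ∀ x ∈ K, φ x ≤ sSup (φ '' K) := fun x hx => le_csSup hbddA ⟨x, hx, rfl⟩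
  have key : ∀ a ∈ K, 0 < ψ a → ∀ b ∈ K, ψ b < 0 →
      (φ xs - φ a) / ψ a ≤ (φ xs - φ b) / ψ b := by
    intro a ha hψa b hb hψb
    set t : ℝ := -ψ b / (ψ a - ψ b) with ht_def
    have hab : 0 < ψ a - ψ b := by linarith
    have ht0 : 0 < t := div_pos (by linarith) hab
    have ht1 : t < 1 := by rw [ht_def, div_lt_one hab]; linarith
    have hsum : t + (1 - t) = 1 := by ring
    have hz : t • a + (1 - t) • b ∈ K := hK ha hb ht0.le (by linarith) hsum
    have hψz : ψ (t • a + (1 - t) • b) = 0 := by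
      rw [Convex.combo_affine_apply hsum]
      simp only [smul_eq_mul, ht_def]
      field_simp
      ring
    have h1 : φ xs ≤ φ (t • a + (1 - t) • b) := hmin _ hz hψz
    have h2 : φ (t • a + (1 - t) • b) ≤ t * φ a + (1 - t) * φ b :=
      hφ.2 ha hb ht0.le (by linarith) hsum
    have h3 : φ xs ≤ t * φ a + (1 - t) * φ b := h1.trans h2
    have ht : t * (ψ a - ψ b) = -ψ b := by rw [ht_def]; field_simp
    have h4 := mul_le_mul_of_nonneg_right h3 hab.le
    have h5 : φ xs * (ψ a - ψ b) ≤ φ a * (-ψ b) + φ b * ψ a := by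
      have hexp : (t * φ a + (1 - t) * φ b) * (ψ a - ψ b)
          = φ a * (t * (ψ a - ψ b)) + φ b * ((ψ a - ψ b) - t * (ψ a - ψ b)) := by ring
      rw [hexp, ht] at h4
      nlinarith [h4]
    rw [show (φ xs - φ b) / ψ b = (φ b - φ xs) / (-ψ b) by
      rw [div_neg, ← neg_div, neg_sub], div_le_div_iff₀ hψa (by linarith)]
    nlinarith [h5]
  set S : Set ℝ := (fun a => (φ xs - φ a) / ψ a) '' {a ∈ K | 0 < ψ a} with hS
  have hSne : S.Nonempty := ⟨_, ⟨x₁, ⟨hx₁, hψ₁⟩, rfl⟩⟩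
  have hSub : ∀ b ∈ K, ψ b < 0 → (φ xs - φ b) / ψ b ∈ upperBounds S := by
    rintro b hb hψb _ ⟨a, ⟨ha, hψa⟩, rfl⟩
    exact key a ha hψa b hb hψb
  have hSbdd : BddAbove S := ⟨_, hSub x₂ hx₂ hψ₂⟩
  refine ⟨sSup S, ?_, ?_, ?_⟩
  · refine le_trans ?_ (le_csSup hSbdd ⟨x₁, ⟨hx₁, hψ₁⟩, rfl⟩)
    exact (div_le_div_iff_of_pos_right hψ₁).mpr (by linarith [hm xs hxs, hM x₁ hx₁])
  · refine le_trans (csSup_le hSne (hSub x₂ hx₂ hψ₂)) ?_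
    rw [div_le_div_right_of_neg hψ₂]
    linarith [hm xs hxs, hM x₂ hx₂]
  · intro x hx
    rcases lt_trichotomy (ψ x) 0 with h | h | h
    · have := csSup_le hSne (hSub x hx h)
      rw [le_div_iff_of_neg h] at this
      linarith
    · have := hmin x hx h
      rw [h]; linarith
    · have := le_csSup hSbdd ⟨x, ⟨hx, h⟩, rfl⟩
      rw [div_le_iff₀ h] at this
      linarith
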